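/- For every integer t ≥ 1, the number M_a(t) of 3×3 magic squares with positive integer entries and magic sum t satisfies M_a(t) = Σ R_ma(s), where the sum is over all integers s with 0 < s < t and s ≡ t (mod 3), and R_ma(s) is the number of reduced 3×3 magic squares with magic sum s. -/

import Mathlib

/-!
Let `c ≥ 1` be the minimum entry of a positive magic square with magic sum `t`. Subtracting `c`
from every entry leaves a reduced magic square with magic sum `s = t - 3c`, so `0 < s < t` and
`s ≡ t (mod 3)`. Conversely, adding `(t - s) / 3 ≥ 1` to every entry of a reduced square with
magic sum `s` gives a positive one with magic sum `t`, and the added constant is recovered as the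
new minimum entry. Hence the positive squares with magic sum `t` are the disjoint union over such
`s` of injective images of the reduced squares with magic sum `s`.
-/

/-- A 3×3 magic square with magic sum `s`: all nine entries distinct, all row
sums, column sums, the main diagonal sum and the antidiagonal sum equal `s`. -/
def IsMagicSqSum (x : Matrix (Fin 3) (Fin 3) ℤ) (s : ℤ) : Prop :=
  (Function.Injective fun p : Fin 3 × Fin 3 => x p.1 p.2) ∧
  (∀ i, ∑ j, x i j = s) ∧ (∀ j, ∑ i, x i j = s) ∧
  x 0 0 + x 1 1 + x 2 2 = s ∧ x 0 2 + x 1 1 + x 2 0 = s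

/-- `Ma t` = number of 3×3 magic squares with positive entries and magic sum t. -/
noncomputable def Ma (t : ℕ) : ℕ :=
  {x : Matrix (Fin 3) (Fin 3) ℤ |
    IsMagicSqSum x (t : ℤ) ∧ ∀ i j, 0 < x i j}.ncard

/-- `Rma s` = number of reduced 3×3 magic squares (nonnegative entries, minimum
entry 0) whose magic sum equals s. -/
noncomputable def Rma (s : ℕ) : ℕ :=
  {x : Matrix (Fin 3) (Fin 3) ℤ |
    IsMagicSqSum x (s : ℤ) ∧ (∀ i j, 0 ≤ x i j) ∧ (∃ i j, x i j = 0)}.ncard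

open Finset

def positiveMagicSqs (t : ℤ) : Set (Matrix (Fin 3) (Fin 3) ℤ) :=
  {y | IsMagicSqSum y t ∧ ∀ i j, 0 < y i j}

def reducedMagicSqs (s : ℤ) : Set (Matrix (Fin 3) (Fin 3) ℤ) :=
  {x | IsMagicSqSum x s ∧ (∀ i j, 0 ≤ x i j) ∧ ∃ i j, x i j = 0}

section shiftEntries

variable {m n : Type*}

def shiftEntries (c : ℤ) (x : Matrix m n ℤ) : Matrix m n ℤ :=
  fun i j => x i j + c

theorem shiftEntries_injective (c : ℤ) :
    Function.Injective (shiftEntries c : Matrix m n ℤ → Matrix m n ℤ) :=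
  fun _ _ h => funext₂ fun i j => add_right_cancel (congrFun₂ h i j)

theorem eq_of_shiftEntries_eq_shiftEntries {x x' : Matrix m n ℤ} {c c' : ℤ}
    (hx : ∀ i j, 0 ≤ x i j) (hx0 : ∃ i j, x i j = 0)
    (hx' : ∀ i j, 0 ≤ x' i j) (hx'0 : ∃ i j, x' i j = 0)
    (h : shiftEntries c x = shiftEntries c' x') : c = c' := by
  obtain ⟨i, j, hij⟩ := hx0
  obtain ⟨i', j', hij'⟩ := hx'0
  have := congrFun₂ h i j
  have := congrFun₂ h i' j'
  simp only [shiftEntries] at *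
  linarith [hx i' j', hx' i j]

end shiftEntries

namespace IsMagicSqSum

variable {x : Matrix (Fin 3) (Fin 3) ℤ} {s : ℤ}

theorem shiftEntries (h : IsMagicSqSum x s) (c : ℤ) :
    IsMagicSqSum (shiftEntries c x) (s + 3 * c) := by
  obtain ⟨hinj, hrow, hcol, hdiag, hanti⟩ := h
  refine ⟨fun p q hpq => hinj (add_right_cancel hpq), fun i => ?_, fun j => ?_,
    by simp only [_root_.shiftEntries]; linarith, by simp only [_root_.shiftEntries]; linarith⟩
  · simp [_root_.shiftEntries, sum_add_distrib, hrow i]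
  · simp [_root_.shiftEntries, sum_add_distrib, hcol j]

/-- Three distinct nonnegative entries in a row cannot sum to something nonpositive. -/
theorem pos_of_nonneg (h : IsMagicSqSum x s) (hx : ∀ i j, 0 ≤ x i j) : 0 < s := by
  by_contra! hs
  have hrow := h.2.1 0
  simp only [Fin.sum_univ_three] at hrow
  have h00 := hx 0 0
  have h01 := hx 0 1
  have h02 := hx 0 2
  have : ((0, 0) : Fin 3 × Fin 3) = (0, 1) := h.1 (by change x 0 0 = x 0 1; omega)
  simp at this

theorem le_of_nonneg (h : IsMagicSqSum x s) (hx : ∀ i j, 0 ≤ x i j) (i j : Fin 3) :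
    x i j ≤ s :=
  h.2.1 i ▸ single_le_sum (fun k _ => hx i k) (mem_univ j)

end IsMagicSqSum

theorem reducedMagicSqs_finite (s : ℤ) : (reducedMagicSqs s).Finite := by
  refine (Set.Finite.pi' fun _ => Set.Finite.pi' fun _ => Set.finite_Icc 0 s).subset ?_
  rintro x ⟨hx, hnn, -⟩ i j
  exact ⟨hnn i j, hx.le_of_nonneg hnn i j⟩

theorem disjoint_shiftEntries_image_reducedMagicSqs {c c' : ℤ} (hc : c ≠ c') (s s' : ℤ) :
    Disjoint (shiftEntries c '' reducedMagicSqs s) (shiftEntries c' '' reducedMagicSqs s') := by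
  rw [Set.disjoint_left]
  rintro _ ⟨x, ⟨-, hx, hx0⟩, rfl⟩ ⟨x', ⟨-, hx', hx'0⟩, h⟩
  exact hc (eq_of_shiftEntries_eq_shiftEntries hx hx0 hx' hx'0 h.symm)

theorem exists_shiftEntries_of_mem_positiveMagicSqs {y : Matrix (Fin 3) (Fin 3) ℤ} {t : ℤ}
    (hy : y ∈ positiveMagicSqs t) :
    ∃ c, 0 < c ∧ ∃ x ∈ reducedMagicSqs (t - 3 * c), shiftEntries c x = y := by
  obtain ⟨hmagic, hpos⟩ := hy
  obtain ⟨⟨i₀, j₀⟩, hmin⟩ := Finite.exists_min fun p : Fin 3 × Fin 3 => y p.1 p.2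
  refine ⟨y i₀ j₀, hpos i₀ j₀, shiftEntries (-y i₀ j₀) y,
    ⟨?_, fun i j => ?_, i₀, j₀, ?_⟩, ?_⟩
  · simpa [← sub_eq_add_neg] using hmagic.shiftEntries (-y i₀ j₀)
  · simpa [shiftEntries] using hmin (i, j)
  · simp [shiftEntries]
  · ext i j
    simp [shiftEntries]

theorem positiveMagicSqs_eq_biUnion (t : ℕ) :
    positiveMagicSqs t = ⋃ s ∈ (Ioo 0 t).filter (fun s => s % 3 = t % 3),
      shiftEntries (((t : ℤ) - s) / 3) '' reducedMagicSqs s := by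
  ext y
  simp only [Set.mem_iUnion, Set.mem_image, mem_filter, mem_Ioo, exists_prop]
  constructor
  · intro hy
    obtain ⟨c, hc, x, hx, rfl⟩ := exists_shiftEntries_of_mem_positiveMagicSqs hy
    have hs := hx.1.pos_of_nonneg hx.2.1
    refine ⟨(t - 3 * c).toNat, ⟨⟨by omega, by omega⟩, by omega⟩, x, ?_, ?_⟩
    · rwa [Int.toNat_of_nonneg hs.le]
    · congr 1
      omega
  · rintro ⟨s, hs, x, ⟨hx, hnn, -⟩, rfl⟩
    refine ⟨?_, fun i j => ?_⟩
    · convert hx.shiftEntries (((t : ℤ) - s) / 3) using 1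
      omega
    · have := hnn i j
      simp only [shiftEntries]
      omega

theorem magic_affine_via_reduced_general (t : ℕ) :
    Ma t = ∑ s ∈ (Finset.Ioo 0 t).filter (fun s => s % 3 = t % 3), Rma s := by
  change (positiveMagicSqs t).ncard = _
  rw [positiveMagicSqs_eq_biUnion, ← set_biUnion_coe, Set.Finite.ncard_biUnion (finite_toSet _)
    (fun _ _ => (reducedMagicSqs_finite _).image _), finsum_mem_coe_finset]
  · exact sum_congr rfl fun s _ => Set.ncard_image_of_injective _ (shiftEntries_injective _)
  · intro s hs s' hs' hne
    simp only [coe_filter, mem_Ioo, Set.mem_ofPred_eq] at hs hs'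
    exact disjoint_shiftEntries_image_reducedMagicSqs (by omega) _ _

theorem magic_affine_via_reduced (t : ℕ) (ht : 1 ≤ t) :
    Ma t = ∑ s ∈ (Finset.Ioo 0 t).filter (fun s => s % 3 = t % 3), Rma s :=
  magic_affine_via_reduced_general t
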